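/- arXiv:2101.10695 — 3 statements merged into one kernel-verified Lean document; each statement's English description precedes it below -/
import Mathlib

section
/- Let μ be the probability measure on ℝⁿ (n ≥ 1) with density e^{−φ(x)} 1_K(x), where K ⊆ ℝⁿ is a convex set and φ : ℝⁿ → ℝ is Lipschitz with constant L on K. If the closed Euclidean ball B(x₀,δ) of radius 0 < δ ≤ 1 around x₀ is contained in K, then log(1/μ(B(x₀,δ))) ≤ φ(x₀) + Lδ + n log(1/δ) + n log n. -/
open MeasureTheory ProbabilityTheory

/-- Squared 2-Wasserstein distance between two measures on `ℝⁿ`: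
the infimum of `∫ ‖x - y‖²` over all couplings. -/
noncomputable def W2sq {n : ℕ}
    (μ ν : Measure (EuclideanSpace ℝ (Fin n))) : ℝ :=
  sInf { c : ℝ | ∃ γ : Measure (EuclideanSpace ℝ (Fin n) × EuclideanSpace ℝ (Fin n)),
    γ.map Prod.fst = μ ∧ γ.map Prod.snd = ν ∧ c = ∫ p, ‖p.1 - p.2‖ ^ 2 ∂γ }

/-- The Gaussian measure on `ℝⁿ` centered at `m` with covariance `c • Id`. -/
noncomputable def gaussianPi (n : ℕ) (m : EuclideanSpace ℝ (Fin n)) (c : ℝ) :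
    Measure (EuclideanSpace ℝ (Fin n)) :=
  volume.withDensity fun x =>
    ENNReal.ofReal ((2 * Real.pi * c) ^ (-(n : ℝ) / 2) * Real.exp (-‖x - m‖ ^ 2 / (2 * c)))

/-- `μ` satisfies the logarithmic Sobolev inequality with constant `C`. -/
def SatisfiesLogSobolev {n : ℕ} (μ : Measure (EuclideanSpace ℝ (Fin n))) (C : ℝ) : Prop :=
  ∀ f : EuclideanSpace ℝ (Fin n) → ℝ, ContDiff ℝ (⊤ : ℕ∞) f → HasCompactSupport f →
    ∫ x, f x ^ 2 * Real.log (f x ^ 2 / ∫ y, f y ^ 2 ∂μ) ∂μ ≤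
      2 * C * ∫ x, ‖gradient f x‖ ^ 2 ∂μ

/-- `μ` satisfies the Poincaré inequality with constant `C`. -/
def SatisfiesPoincare {n : ℕ} (μ : Measure (EuclideanSpace ℝ (Fin n))) (C : ℝ) : Prop :=
  ∀ f : EuclideanSpace ℝ (Fin n) → ℝ, ContDiff ℝ (⊤ : ℕ∞) f → HasCompactSupport f →
    ∫ x, (f x - ∫ y, f y ∂μ) ^ 2 ∂μ ≤ C * ∫ x, ‖gradient f x‖ ^ 2 ∂μ

/-- Chi-square divergence `χ²(ν | μ) = ∫ (dν/dμ - 1)² dμ`. -/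
noncomputable def chiSq {n : ℕ} (ν μ : Measure (EuclideanSpace ℝ (Fin n))) : ℝ :=
  ∫ x, ((ν.rnDeriv μ x).toReal - 1) ^ 2 ∂μ

-- Γ(n/2+1) ≤ n^n for 1 ≤ n
lemma gamma_half_le (n : ℕ) (hn : 1 ≤ n) :
    Real.Gamma ((n : ℝ) / 2 + 1) ≤ (n : ℝ) ^ n := by
  rcases eq_or_lt_of_le hn with h | h
  · rw [← h]; norm_num
    calc Real.Gamma (3/2) ≤ 1 := Real.Gamma_three_div_two_lt_one.le
    _ = _ := by norm_num
  · have h2 : 2 ≤ n := h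
    have hle : Real.Gamma ((n : ℝ) / 2 + 1) ≤ Real.Gamma ((n : ℝ) + 1) := by
      apply Real.Gamma_strictMonoOn_Ici.monotoneOn
      · simp only [Set.mem_Ici]
        have : (2 : ℝ) ≤ n := by exact_mod_cast h2
        linarith
      · simp only [Set.mem_Ici]
        have : (2 : ℝ) ≤ n := by exact_mod_cast h2
        linarith
      · have : (0 : ℝ) < n := by positivity
        linarith
    calc Real.Gamma ((n : ℝ) / 2 + 1) ≤ Real.Gamma ((n : ℝ) + 1) := hle
      _ = (n.factorial : ℝ) := Real.Gamma_nat_eq_factorial n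
      _ ≤ (n : ℝ) ^ n := by exact_mod_cast Nat.factorial_le_pow n

/-- **Small-ball estimate.**
If `μ` has density `e^{-φ} 1_K` with `φ` `L`-Lipschitz on the convex set `K`, and the
closed ball `B(x₀, δ)` with `0 < δ ≤ 1` is contained in `K`, then
`log (1/μ(B(x₀,δ))) ≤ φ(x₀) + Lδ + n log(1/δ) + n log n`. -/
theorem log_inv_measure_ball_le
    (n : ℕ) (hn : 1 ≤ n)
    (K : Set (EuclideanSpace ℝ (Fin n))) (hKconv : Convex ℝ K)
    (φ : EuclideanSpace ℝ (Fin n) → ℝ)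
    (L : ℝ) (hL : 0 ≤ L) (hφLip : LipschitzOnWith (Real.toNNReal L) φ K)
    (μ : Measure (EuclideanSpace ℝ (Fin n)))
    (hμ : μ = volume.withDensity (K.indicator fun x => ENNReal.ofReal (Real.exp (-φ x))))
    (hμprob : IsProbabilityMeasure μ)
    (x₀ : EuclideanSpace ℝ (Fin n)) (δ : ℝ) (hδ : 0 < δ) (hδ1 : δ ≤ 1)
    (hball : Metric.closedBall x₀ δ ⊆ K) :
    Real.log (1 / (μ (Metric.closedBall x₀ δ)).toReal) ≤
      φ x₀ + L * δ + n * Real.log (1 / δ) + n * Real.log n := by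
  set B := Metric.closedBall x₀ δ with hB
  set a := φ x₀ + L * δ with ha
  set v := Real.sqrt Real.pi ^ n / Real.Gamma ((n : ℝ) / 2 + 1) with hv
  have hnpos : (0 : ℝ) < n := by exact_mod_cast hn
  haveI : Nonempty (Fin n) := Fin.pos_iff_nonempty.1 hn
  have hΓpos : 0 < Real.Gamma ((n : ℝ) / 2 + 1) :=
    Real.Gamma_pos_of_pos (by positivity)
  have hsqrtpi : (1 : ℝ) ≤ Real.sqrt Real.pi := by
    rw [show (1 : ℝ) = Real.sqrt 1 by simp]
    exact Real.sqrt_le_sqrt (by linarith [Real.pi_gt_three])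
  have hvpos : 0 < v := by positivity
  have hvge : 1 / (n : ℝ) ^ n ≤ v :=
    div_le_div₀ (by positivity) (one_le_pow₀ hsqrtpi) hΓpos
      (gamma_half_le n hn)
  -- lower bound for the measure of the ball
  have hφle : ∀ x ∈ B, Real.exp (-a) ≤ Real.exp (-φ x) := by
    intro x hx
    apply Real.exp_le_exp.2
    have hxK : x ∈ K := hball hx
    have := hφLip.dist_le_mul x hxK x₀ (hball (Metric.mem_closedBall_self hδ.le))
    have hd : dist x x₀ ≤ δ := Metric.mem_closedBall.1 hx
    rw [Real.dist_eq] at this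
    have : |φ x - φ x₀| ≤ L * δ := by
      refine this.trans ?_
      have : (Real.toNNReal L : ℝ) = L := Real.coe_toNNReal L hL
      rw [this]
      exact mul_le_mul_of_nonneg_left hd hL
    have := abs_le.1 this
    simp only [ha]
    linarith [this.1]
  have hlower : ENNReal.ofReal (Real.exp (-a)) * volume B ≤ μ B := by
    rw [hμ, withDensity_apply _ Metric.isClosed_closedBall.measurableSet]
    calc ENNReal.ofReal (Real.exp (-a)) * volume B
        = ∫⁻ _ in B, ENNReal.ofReal (Real.exp (-a)) ∂volume :=
          (setLIntegral_const B _).symm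
      _ ≤ ∫⁻ x in B, K.indicator (fun x => ENNReal.ofReal (Real.exp (-φ x))) x ∂volume := by
          apply setLIntegral_mono' Metric.isClosed_closedBall.measurableSet
          intro x hx
          rw [Set.indicator_of_mem (hball hx)]
          exact ENNReal.ofReal_le_ofReal (hφle x hx)
  have hvol : volume B = ENNReal.ofReal δ ^ n * ENNReal.ofReal v := by
    rw [hB, EuclideanSpace.volume_closedBall]
    simp [hv]
  set m := (μ B).toReal with hm
  have hμBne : μ B ≠ ⊤ := measure_ne_top μ B
  have hlowR : Real.exp (-a) * (δ ^ n * v) ≤ m := by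
    have := ENNReal.toReal_mono hμBne hlower
    rw [hvol] at this
    rw [ENNReal.toReal_mul, ENNReal.toReal_mul, ENNReal.toReal_pow,
      ENNReal.toReal_ofReal (Real.exp_nonneg _), ENNReal.toReal_ofReal hδ.le,
      ENNReal.toReal_ofReal hvpos.le] at this
    exact this
  have hlowpos : 0 < Real.exp (-a) * (δ ^ n * v) := by positivity
  have hmpos : 0 < m := lt_of_lt_of_le hlowpos hlowR
  rw [one_div, Real.log_inv]
  have hloglow : Real.log (Real.exp (-a) * (δ ^ n * v)) ≤ Real.log m :=
    Real.log_le_log hlowpos hlowR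
  have hexp : Real.log (Real.exp (-a) * (δ ^ n * v)) =
      -a + (n * Real.log δ + Real.log v) := by
    rw [Real.log_mul (Real.exp_ne_zero _) (by positivity),
      Real.log_mul (by positivity) (by positivity), Real.log_exp, Real.log_pow]
  have hlogv : -(n : ℝ) * Real.log n ≤ Real.log v := by
    have := Real.log_le_log (by positivity) hvge
    rw [one_div, Real.log_inv, Real.log_pow] at this
    linarith
  have hlogδ : Real.log (1 / δ) = -Real.log δ := by rw [one_div, Real.log_inv]
  rw [hlogδ]
  simp only [ha] at hexp
  nlinarith [hloglow, hexp, hlogv]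
end

section
/- Let μ be any probability measure on ℝⁿ with finite fourth moment ∫ ‖x‖⁴ dμ < ∞, let R > 0 be such that μ(B(0,R)) > 0, and let μ_R denote μ conditioned on the closed ball B(0,R) of radius R centered at 0. Then W₂²(μ, μ_R) ≤ 4 ( ∫_{ℝⁿ} ‖x‖⁴ dμ )^{1/2} · μ({x : ‖x‖ > R})^{1/2}. -/
open MeasureTheory ProbabilityTheory

/-- A measure on `ℝⁿ` is log-concave if it has density `e^{-V} 1_S` with respect to the
Lebesgue measure, where `S` is a convex set and `V` is convex on `S`. -/
def IsLogConcaveMeasure {n : ℕ} (μ : Measure (EuclideanSpace ℝ (Fin n))) : Prop :=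
  ∃ (S : Set (EuclideanSpace ℝ (Fin n))) (V : EuclideanSpace ℝ (Fin n) → ℝ),
    Convex ℝ S ∧ ConvexOn ℝ S V ∧
    μ = volume.withDensity (S.indicator fun x => ENNReal.ofReal (Real.exp (-V x)))

/-- The measure `μ` conditioned on the closed ball of radius `R` centered at the origin. -/
noncomputable def condBall {n : ℕ} (μ : Measure (EuclideanSpace ℝ (Fin n))) (R : ℝ) :
    Measure (EuclideanSpace ℝ (Fin n)) :=
  (μ (Metric.closedBall 0 R))⁻¹ • μ.restrict (Metric.closedBall 0 R)

/-! Couple `μ` with `μ_R` by leaving the mass of `μ` inside the ball where it is and sending the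
mass outside the ball, independently, to `μ_R`. Only points `x` with `‖x‖ > R` move, and they
move to points `y` with `‖y‖ ≤ R`, so `‖x - y‖ ≤ 2 ‖x‖`. The cost of this coupling is therefore at
most `4 ∫_{‖x‖ > R} ‖x‖² dμ`, and Cauchy–Schwarz against the indicator of `{‖x‖ > R}` bounds
that by `4 (∫ ‖x‖⁴ dμ)^{1/2} μ({‖x‖ > R})^{1/2}`. -/

lemma norm_sub_sq_le_four_mul_sq {E : Type*} [SeminormedAddCommGroup E] {x y : E}
    (h : ‖y‖ ≤ ‖x‖) : ‖x - y‖ ^ 2 ≤ 4 * ‖x‖ ^ 2 := by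
  have := norm_sub_le x y
  nlinarith [norm_nonneg (x - y)]

lemma integral_le_integral_of_ae_le_comp_fst {α β : Type*} [MeasurableSpace α]
    [MeasurableSpace β] {μ : Measure α} {γ : Measure (α × β)} (hγ : γ.map Prod.fst = μ)
    {f : α × β → ℝ} {g : α → ℝ} (hf : 0 ≤ᵐ[γ] f) (hg : Integrable g μ)
    (hfg : ∀ᵐ p ∂γ, f p ≤ g p.1) : ∫ p, f p ∂γ ≤ ∫ x, g x ∂μ := by
  subst hγ
  rw [integral_map measurable_fst.aemeasurable hg.aestronglyMeasurable]
  exact integral_mono_of_nonneg hf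
    ((integrable_map_measure hg.aestronglyMeasurable measurable_fst.aemeasurable).1 hg) hfg

section CondCoupling

variable {α : Type*} [MeasurableSpace α] {μ : Measure α} {s : Set α}

lemma smul_cond_eq_restrict [IsFiniteMeasure μ] (hμs : μ s ≠ 0) : μ s • μ[|s] = μ.restrict s := by
  rw [ProbabilityTheory.cond, smul_smul, ENNReal.mul_inv_cancel hμs (measure_ne_top μ s), one_smul]

lemma setIntegral_le_sqrt_measureReal_mul_sqrt_integral_sq [IsFiniteMeasure μ] {f : α → ℝ}
    (hf : 0 ≤ f) (hf2 : MemLp f 2 μ) (hs : MeasurableSet s) :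
    ∫ x in s, f x ∂μ ≤ √(μ.real s) * √(∫ x, f x ^ 2 ∂μ) := by
  have h2 : ENNReal.ofReal 2 = 2 := by norm_num
  have hind : MemLp (s.indicator fun _ => (1 : ℝ)) 2 μ := (memLp_const 1).indicator hs
  have holder := integral_mul_le_Lp_mul_Lq_of_nonneg Real.HolderConjugate.two_two
    (Filter.Eventually.of_forall (Set.indicator_nonneg fun _ _ => zero_le_one))
    (Filter.Eventually.of_forall hf) (h2 ▸ hind) (h2 ▸ hf2)
  have hind_sq : ∫ x, s.indicator (fun _ => (1 : ℝ)) x ^ 2 ∂μ = μ.real s := by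
    rw [← integral_indicator_one hs]
    congr with x
    by_cases hx : x ∈ s <;> simp [hx]
  simpa only [← Set.indicator_mul_left, one_mul, integral_indicator hs, Real.rpow_two,
    ← Real.sqrt_eq_rpow, hind_sq] using holder

variable (μ s) in
noncomputable def condCoupling : Measure (α × α) :=
  (μ.restrict s).map Function.diag + (μ.restrict sᶜ).prod μ[|s]

lemma map_fst_condCoupling [IsFiniteMeasure μ] (hs : MeasurableSet s) (hμs : μ s ≠ 0) :
    (condCoupling μ s).map Prod.fst = μ := by
  have := cond_isProbabilityMeasure (μ := μ) hμs
  rw [condCoupling, Measure.map_add _ _ measurable_fst,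
    Measure.map_map measurable_fst measurable_diag, Measure.map_fst_prod,
    measure_univ, one_smul, Function.fst_comp_diag, Measure.map_id]
  exact Measure.restrict_add_restrict_compl hs

lemma map_snd_condCoupling [IsProbabilityMeasure μ] (hs : MeasurableSet s) (hμs : μ s ≠ 0) :
    (condCoupling μ s).map Prod.snd = μ[|s] := by
  rw [condCoupling, Measure.map_add _ _ measurable_snd,
    Measure.map_map measurable_snd measurable_diag, Measure.map_snd_prod,
    Measure.restrict_apply_univ, Function.snd_comp_diag, Measure.map_id,
    ← smul_cond_eq_restrict hμs, ← add_smul, measure_add_measure_compl hs, measure_univ, one_smul]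

lemma ae_condCoupling [SFinite μ] {P : α × α → Prop} (hP : MeasurableSet {p | P p})
    (hs : MeasurableSet s) (hdiag : ∀ x ∈ s, P (x, x)) (hout : ∀ x ∉ s, ∀ y ∈ s, P (x, y)) :
    ∀ᵐ p ∂condCoupling μ s, P p := by
  rw [condCoupling, ae_add_measure_iff]
  constructor
  · rw [ae_map_iff measurable_diag.aemeasurable hP]
    filter_upwards [ae_restrict_mem hs] with x hx using hdiag x hx
  · filter_upwards [Measure.quasiMeasurePreserving_fst.ae (ae_restrict_mem hs.compl),
      Measure.quasiMeasurePreserving_snd.ae (ae_cond_mem hs)] with p h1 h2 using hout p.1 h1 p.2 h2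

lemma integral_condCoupling_le [IsFiniteMeasure μ] (hs : MeasurableSet s) (hμs : μ s ≠ 0)
    {c : α × α → ℝ} {g : α → ℝ} (hc : Measurable c) (hg : Measurable g)
    (hgi : IntegrableOn g sᶜ μ) (hc0 : 0 ≤ c) (hdiag : ∀ x ∈ s, c (x, x) = 0)
    (hout : ∀ x ∉ s, ∀ y ∈ s, c (x, y) ≤ g x) :
    ∫ p, c p ∂condCoupling μ s ≤ ∫ x in sᶜ, g x ∂μ := by
  rw [← integral_indicator hs.compl]
  refine integral_le_integral_of_ae_le_comp_fst (map_fst_condCoupling hs hμs)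
    (Filter.Eventually.of_forall hc0) (hgi.integrable_indicator hs.compl)
    (ae_condCoupling (measurableSet_le hc ((hg.indicator hs.compl).comp measurable_fst)) hs
      (fun x hx => ?_) (fun x hx y hy => ?_))
  · simp [hdiag x hx, hx]
  · simpa [hx] using hout x hx y hy

end CondCoupling

lemma W2sq_le_integral {n : ℕ} {μ ν : Measure (EuclideanSpace ℝ (Fin n))}
    (γ : Measure (EuclideanSpace ℝ (Fin n) × EuclideanSpace ℝ (Fin n)))
    (hγ₁ : γ.map Prod.fst = μ) (hγ₂ : γ.map Prod.snd = ν) :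
    W2sq μ ν ≤ ∫ p, ‖p.1 - p.2‖ ^ 2 ∂γ :=
  csInf_le ⟨0, by rintro _ ⟨γ, -, -, rfl⟩; positivity⟩ ⟨γ, hγ₁, hγ₂, rfl⟩

lemma condBall_eq_cond {n : ℕ} (μ : Measure (EuclideanSpace ℝ (Fin n))) (R : ℝ) :
    condBall μ R = μ[|Metric.closedBall 0 R] :=
  rfl

theorem w2sq_condBall_le_of_fourth_moment_general
    (n : ℕ)
    (μ : Measure (EuclideanSpace ℝ (Fin n))) [IsProbabilityMeasure μ]
    (hmom : Integrable (fun x => ‖x‖ ^ 4) μ)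
    (R : ℝ) (hball : 0 < μ (Metric.closedBall 0 R)) :
    W2sq μ (condBall μ R) ≤
      4 * Real.sqrt (∫ x, ‖x‖ ^ 4 ∂μ) *
        Real.sqrt ((μ {x | R < ‖x‖}).toReal) := by
  set B := Metric.closedBall (0 : EuclideanSpace ℝ (Fin n)) R
  have hB : MeasurableSet B := measurableSet_closedBall
  have hcompl : {x | R < ‖x‖} = Bᶜ := by ext; simp [B]
  have hsq : MemLp (fun x => ‖x‖ ^ 2) 2 μ :=
    (memLp_two_iff_integrable_sq (by fun_prop)).2 (by simpa only [← pow_mul] using hmom)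
  rw [condBall_eq_cond]
  calc W2sq μ μ[|B]
      ≤ ∫ p, ‖p.1 - p.2‖ ^ 2 ∂condCoupling μ B :=
        W2sq_le_integral _ (map_fst_condCoupling hB hball.ne') (map_snd_condCoupling hB hball.ne')
    _ ≤ ∫ x in Bᶜ, 4 * ‖x‖ ^ 2 ∂μ :=
        integral_condCoupling_le hB hball.ne' (by fun_prop) (by fun_prop)
          ((hsq.integrable one_le_two).const_mul 4).integrableOn (fun _ => by positivity)
          (by simp) fun x hx y hy => norm_sub_sq_le_four_mul_sq <| by
            simp only [B, Metric.mem_closedBall, dist_zero_right, not_le] at hx hy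
            linarith
    _ = 4 * ∫ x in Bᶜ, ‖x‖ ^ 2 ∂μ := integral_const_mul _ _
    _ ≤ 4 * (√(μ.real Bᶜ) * √(∫ x, (‖x‖ ^ 2) ^ 2 ∂μ)) := by
        gcongr
        exact setIntegral_le_sqrt_measureReal_mul_sqrt_integral_sq (fun _ => by positivity) hsq
          hB.compl
    _ = 4 * √(∫ x, ‖x‖ ^ 4 ∂μ) * √((μ {x | R < ‖x‖}).toReal) := by
        simp only [← pow_mul, hcompl, measureReal_def]
        ring

/-- **Truncation estimate in Wasserstein distance.**
For any probability measure `μ` on `ℝⁿ` with finite fourth moment and any `R > 0` with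
`μ(B(0,R)) > 0`, the conditioned measure `μ_R` satisfies
`W₂²(μ, μ_R) ≤ 4 (∫ ‖x‖⁴ dμ)^{1/2} μ({‖x‖ > R})^{1/2}`. -/
theorem w2sq_condBall_le_of_fourth_moment
    (n : ℕ) (hn : 1 ≤ n)
    (μ : Measure (EuclideanSpace ℝ (Fin n))) [IsProbabilityMeasure μ]
    (hmom : Integrable (fun x => ‖x‖ ^ 4) μ)
    (R : ℝ) (hR : 0 < R) (hball : 0 < μ (Metric.closedBall 0 R)) :
    W2sq μ (condBall μ R) ≤
      4 * Real.sqrt (∫ x, ‖x‖ ^ 4 ∂μ) *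
        Real.sqrt ((μ {x | R < ‖x‖}).toReal) :=
  w2sq_condBall_le_of_fourth_moment_general n μ hmom R hball
end

section
/- Let μ be a probability measure on ℝⁿ with density e^{−φ} with respect to Lebesgue measure, where φ : ℝⁿ → ℝ is globally Lipschitz with constant L. Fix x₀ ∈ ℝⁿ and α > 0, and let γ be the Gaussian measure centered at x₀ with covariance α·Id. Then χ²(γ|μ) ≤ (2πα)^{−n/2} exp( φ(x₀) + L²α/2 ). -/
open MeasureTheory ProbabilityTheory

section AuxChiSq

open Real


private lemma integrable_gauss_norm (n : ℕ) {b : ℝ} (hb : 0 < b) :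
    Integrable (fun v : EuclideanSpace ℝ (Fin n) => Real.exp (-b * ‖v‖ ^ 2)) := by
  have h := GaussianFourier.integrable_cexp_neg_mul_sq_norm_add
      (V := EuclideanSpace ℝ (Fin n)) (b := (b : ℂ)) (by simpa using hb) 0 0
  simp only [zero_mul, add_zero] at h
  refine h.re.congr (Filter.Eventually.of_forall fun v => ?_)
  have : (-(b : ℂ) * (‖v‖ : ℂ) ^ 2) = ((-b * ‖v‖ ^ 2 : ℝ) : ℂ) := by push_cast; ring
  simp only [this]
  exact Complex.exp_ofReal_re _

private lemma integral_gauss_norm (n : ℕ) {b : ℝ} (hb : 0 < b) :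
    ∫ v : EuclideanSpace ℝ (Fin n), Real.exp (-b * ‖v‖ ^ 2) = (Real.pi / b) ^ ((n : ℝ) / 2) := by
  rw [GaussianFourier.integral_rexp_neg_mul_sq_norm hb]
  simp [finrank_euclideanSpace_fin]

private lemma integral_gauss_norm_sub (n : ℕ) {b : ℝ} (hb : 0 < b)
    (x₀ : EuclideanSpace ℝ (Fin n)) :
    ∫ x : EuclideanSpace ℝ (Fin n), Real.exp (-b * ‖x - x₀‖ ^ 2) =
      (Real.pi / b) ^ ((n : ℝ) / 2) := by
  rw [integral_sub_right_eq_self (fun v : EuclideanSpace ℝ (Fin n) => Real.exp (-b * ‖v‖ ^ 2)) x₀]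
  exact integral_gauss_norm n hb

private lemma integrable_gauss_norm_sub (n : ℕ) {b : ℝ} (hb : 0 < b)
    (x₀ : EuclideanSpace ℝ (Fin n)) :
    Integrable (fun x : EuclideanSpace ℝ (Fin n) => Real.exp (-b * ‖x - x₀‖ ^ 2)) := by
  have h0 := integrable_gauss_norm n hb
  exact ((measurePreserving_sub_right volume x₀).integrable_comp
    h0.aestronglyMeasurable).mpr h0


theorem chiSq_gaussian_le'
    (n : ℕ) (hn : 1 ≤ n)
    (φ : EuclideanSpace ℝ (Fin n) → ℝ)
    (L : ℝ) (hL : 0 < L) (hφLip : LipschitzWith (Real.toNNReal L) φ)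
    (μ : Measure (EuclideanSpace ℝ (Fin n)))
    (hμ : μ = volume.withDensity fun x => ENNReal.ofReal (Real.exp (-φ x)))
    (hμprob : IsProbabilityMeasure μ)
    (x₀ : EuclideanSpace ℝ (Fin n)) (α : ℝ) (hα : 0 < α)
    (γ : Measure (EuclideanSpace ℝ (Fin n)))
    (hγ : γ = volume.withDensity fun x =>
      ENNReal.ofReal ((2 * Real.pi * α) ^ (-(n : ℝ) / 2) * Real.exp (-‖x - x₀‖ ^ 2 / (2 * α)))) :
    (∫ x, ((γ.rnDeriv μ x).toReal - 1) ^ 2 ∂μ) ≤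
      (2 * Real.pi * α) ^ (-(n : ℝ) / 2) * Real.exp (φ x₀ + L ^ 2 * α / 2) := by
  have h2πα : (0 : ℝ) < 2 * Real.pi * α := by positivity
  set c : ℝ := (2 * Real.pi * α) ^ (-(n : ℝ) / 2) with hc
  have hcpos : 0 < c := Real.rpow_pos_of_pos h2πα _
  set f : EuclideanSpace ℝ (Fin n) → ℝ :=
    fun x => c * Real.exp (-‖x - x₀‖ ^ 2 / (2 * α)) with hf
  have hfpos : ∀ x, 0 < f x := fun x => by positivity
  have hφcont : Continuous φ := hφLip.continuous
  set g : EuclideanSpace ℝ (Fin n) → ℝ := fun x => f x * Real.exp (φ x) with hg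
  have hgpos : ∀ x, 0 < g x := fun x => mul_pos (hfpos x) (Real.exp_pos _)
  have hfcont : Continuous f := continuous_const.mul
    (Real.continuous_exp.comp (((continuous_id.sub continuous_const).norm.pow 2).neg.div_const _))
  have hgcont : Continuous g := hfcont.mul (Real.continuous_exp.comp hφcont)
  set k : EuclideanSpace ℝ (Fin n) → ENNReal := fun x => ENNReal.ofReal (g x) with hk
  have hk_meas : Measurable k := ENNReal.measurable_ofReal.comp hgcont.measurable
  have hρ_meas : Measurable fun x => ENNReal.ofReal (Real.exp (-φ x)) :=
    ENNReal.measurable_ofReal.comp (Real.continuous_exp.comp hφcont.neg).measurable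
  -- γ = μ.withDensity k
  have hγμ : γ = μ.withDensity k := by
    rw [hγ, hμ, ← withDensity_mul _ hρ_meas hk_meas]
    congr 1
    funext x
    simp only [Pi.mul_apply, hk, hg, hf]
    rw [← ENNReal.ofReal_mul (Real.exp_pos _).le]
    congr 1
    rw [show Real.exp (-φ x) * (c * Real.exp (-‖x - x₀‖ ^ 2 / (2 * α)) * Real.exp (φ x)) =
      c * Real.exp (-‖x - x₀‖ ^ 2 / (2 * α)) * (Real.exp (φ x) * Real.exp (-φ x)) from by ring,
      ← Real.exp_add]
    simp
  have hγac : γ ≪ μ := hγμ ▸ withDensity_absolutelyContinuous μ k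
  have hrn : γ.rnDeriv μ =ᵐ[μ] k := by
    rw [hγμ]; exact Measure.rnDeriv_withDensity μ hk_meas
  have hchi : (∫ x, ((γ.rnDeriv μ x).toReal - 1) ^ 2 ∂μ) = ∫ x, (g x - 1) ^ 2 ∂μ := by
    apply integral_congr_ae
    filter_upwards [hrn] with x hx
    rw [hx, hk, ENNReal.toReal_ofReal (hgpos x).le]
  -- transfer integrals over μ to volume
  have hnn_meas : Measurable fun x => Real.toNNReal (Real.exp (-φ x)) :=
    measurable_real_toNNReal.comp (Real.continuous_exp.comp hφcont.neg).measurable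
  have hint_mu : ∀ u : EuclideanSpace ℝ (Fin n) → ℝ,
      ∫ x, u x ∂μ = ∫ x, Real.exp (-φ x) * u x := by
    intro u
    rw [hμ]
    have hco : (fun x => ENNReal.ofReal (Real.exp (-φ x))) =
        fun x => ((Real.toNNReal (Real.exp (-φ x)) : NNReal) : ENNReal) := rfl
    rw [hco, integral_withDensity_eq_integral_smul hnn_meas u]
    congr 1
    funext x
    rw [NNReal.smul_def, smul_eq_mul, Real.coe_toNNReal _ (Real.exp_pos _).le]
  have hint_iff : ∀ u : EuclideanSpace ℝ (Fin n) → ℝ,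
      Integrable u μ ↔ Integrable (fun x => u x * Real.exp (-φ x)) volume := by
    intro u
    rw [hμ, integrable_withDensity_iff hρ_meas
      (Filter.Eventually.of_forall fun x => ENNReal.ofReal_lt_top)]
    have : ∀ x : EuclideanSpace ℝ (Fin n),
        (ENNReal.ofReal (Real.exp (-φ x))).toReal = Real.exp (-φ x) :=
      fun x => ENNReal.toReal_ofReal (Real.exp_pos _).le
    simp_rw [this]
  -- Gaussian integral values
  have hb : (0 : ℝ) < (2 * α)⁻¹ := by positivity
  have hπb : Real.pi / (2 * α)⁻¹ = 2 * Real.pi * α := by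
    field_simp
  have hgauss_val : ∫ x : EuclideanSpace ℝ (Fin n),
      Real.exp (-(2 * α)⁻¹ * ‖x - x₀‖ ^ 2) = (2 * Real.pi * α) ^ ((n : ℝ) / 2) := by
    rw [integral_gauss_norm_sub n hb x₀, hπb]
  have hc1 : c * (2 * Real.pi * α) ^ ((n : ℝ) / 2) = 1 := by
    rw [hc, ← Real.rpow_add h2πα]
    rw [show -(n : ℝ) / 2 + (n : ℝ) / 2 = 0 from by ring, Real.rpow_zero]
  -- f pointwise form and integral
  have hfeq : ∀ x : EuclideanSpace ℝ (Fin n),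
      f x = c * Real.exp (-(2 * α)⁻¹ * ‖x - x₀‖ ^ 2) := by
    intro x
    simp only [hf]
    rw [show -‖x - x₀‖ ^ 2 / (2 * α) = -(2 * α)⁻¹ * ‖x - x₀‖ ^ 2 from by ring]
  have hfint : Integrable f volume := by
    refine ((integrable_gauss_norm_sub n hb x₀).const_mul c).congr
      (Filter.Eventually.of_forall fun x => ?_)
    exact (hfeq x).symm
  have hfval : ∫ x, f x = 1 := by
    simp_rw [hfeq]
    rw [integral_const_mul, hgauss_val, hc1]
  -- ∫ g dμ = 1
  have hge : (fun x => g x * Real.exp (-φ x)) = f := by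
    funext x
    simp only [hg, hf]
    rw [mul_assoc, ← Real.exp_add]
    simp
  have Igμ : Integrable g μ := by
    rw [hint_iff, hge]; exact hfint
  have hgval : ∫ x, g x ∂μ = 1 := by
    rw [hint_mu g]
    rw [show (fun x => Real.exp (-φ x) * g x) = f from by
      funext x; rw [← hge]; ring]
    exact hfval
  -- key pointwise bound for g²e^{-φ}
  set M : ℝ := c * Real.exp (φ x₀ + L ^ 2 * α / 2) with hM
  have hkey : ∀ x : EuclideanSpace ℝ (Fin n), g x ^ 2 * Real.exp (-φ x) ≤
      c ^ 2 * Real.exp (φ x₀ + L ^ 2 * α / 2) * Real.exp (-(2 * α)⁻¹ * ‖x - x₀‖ ^ 2) := by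
    intro x
    set t : ℝ := ‖x - x₀‖ with ht
    have htnn : 0 ≤ t := norm_nonneg _
    have hφx : φ x ≤ φ x₀ + L * t := by
      have h1 := hφLip.dist_le_mul x x₀
      rw [Real.dist_eq, dist_eq_norm, Real.coe_toNNReal _ hL.le] at h1
      have := (abs_le.mp h1).2
      linarith
    have hA : g x ^ 2 * Real.exp (-φ x) =
        c ^ 2 * Real.exp (-(t ^ 2 / α) + φ x) := by
      simp only [hg, hf, ← ht]
      rw [show (c * Real.exp (-t ^ 2 / (2 * α)) * Real.exp (φ x)) ^ 2 * Real.exp (-φ x) =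
        c ^ 2 * (Real.exp (-t ^ 2 / (2 * α)) * Real.exp (-t ^ 2 / (2 * α)) *
          (Real.exp (φ x) * (Real.exp (φ x) * Real.exp (-φ x)))) from by ring]
      rw [← Real.exp_add, ← Real.exp_add, ← Real.exp_add, ← Real.exp_add]
      congr 1
      field_simp
      ring
    have hB : c ^ 2 * Real.exp (φ x₀ + L ^ 2 * α / 2) * Real.exp (-(2 * α)⁻¹ * t ^ 2) =
        c ^ 2 * Real.exp (φ x₀ + L ^ 2 * α / 2 + -(2 * α)⁻¹ * t ^ 2) := by
      rw [mul_assoc, ← Real.exp_add]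
    rw [hA, hB]
    apply mul_le_mul_of_nonneg_left _ (sq_nonneg c)
    apply Real.exp_le_exp.mpr
    rw [show -(2 * α)⁻¹ * t ^ 2 = -(t ^ 2 / α / 2) from by ring]
    have h0 : 0 ≤ (t - L * α) ^ 2 / (2 * α) := div_nonneg (sq_nonneg _) (by linarith)
    have hid : (t - L * α) ^ 2 / (2 * α) = t ^ 2 / α / 2 - L * t + L ^ 2 * α / 2 := by
      field_simp
      ring
    have h5 : 0 ≤ t ^ 2 / α / 2 - L * t + L ^ 2 * α / 2 := by linarith
    linarith [hφx, h5]
  -- integrability and integral bound for g² over μ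
  have hHint : Integrable (fun x : EuclideanSpace ℝ (Fin n) =>
      c ^ 2 * Real.exp (φ x₀ + L ^ 2 * α / 2) * Real.exp (-(2 * α)⁻¹ * ‖x - x₀‖ ^ 2)) volume :=
    (integrable_gauss_norm_sub n hb x₀).const_mul _
  have hg2cont : Continuous fun x => g x ^ 2 * Real.exp (-φ x) :=
    (hgcont.pow 2).mul (Real.continuous_exp.comp hφcont.neg)
  have hg2vol : Integrable (fun x => g x ^ 2 * Real.exp (-φ x)) volume := by
    refine hHint.mono' hg2cont.aestronglyMeasurable
      (Filter.Eventually.of_forall fun x => ?_)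
    rw [Real.norm_eq_abs, abs_of_nonneg (by positivity)]
    exact hkey x
  have Ig2μ : Integrable (fun x => g x ^ 2) μ := by
    rw [hint_iff]; exact hg2vol
  have hg2le : ∫ x, g x ^ 2 ∂μ ≤ M := by
    rw [hint_mu fun x => g x ^ 2]
    have heq : (fun x => Real.exp (-φ x) * g x ^ 2) =
        fun x => g x ^ 2 * Real.exp (-φ x) := by funext x; ring
    rw [heq]
    calc ∫ x, g x ^ 2 * Real.exp (-φ x) ≤ ∫ x : EuclideanSpace ℝ (Fin n),
          c ^ 2 * Real.exp (φ x₀ + L ^ 2 * α / 2) * Real.exp (-(2 * α)⁻¹ * ‖x - x₀‖ ^ 2) :=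
        integral_mono hg2vol hHint hkey
      _ = M := by
        rw [integral_const_mul, hgauss_val, hM]
        rw [show c ^ 2 * Real.exp (φ x₀ + L ^ 2 * α / 2) * (2 * Real.pi * α) ^ ((n : ℝ) / 2) =
          c * Real.exp (φ x₀ + L ^ 2 * α / 2) * (c * (2 * Real.pi * α) ^ ((n : ℝ) / 2)) from
          by ring, hc1, mul_one]
  -- put it together
  rw [hchi]
  have hexpand : ∫ x, (g x - 1) ^ 2 ∂μ = ∫ x, g x ^ 2 ∂μ - 2 * ∫ x, g x ∂μ + 1 := by
    have h1 : (fun x => (g x - 1) ^ 2) = fun x => g x ^ 2 - 2 * g x + 1 := by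
      funext x; ring
    rw [h1]
    have hsub : Integrable (fun x => g x ^ 2 - 2 * g x) μ := Ig2μ.sub (Igμ.const_mul 2)
    rw [integral_add hsub (integrable_const 1),
      integral_sub Ig2μ (Igμ.const_mul 2), integral_const_mul, integral_const]
    simp
  rw [hexpand, hgval]
  linarith

end AuxChiSq

/-- If `μ = e^{-φ} dx` is a probability measure on `ℝⁿ` with `φ` globally `L`-Lipschitz and
`γ` is the Gaussian measure centered at `x₀` with covariance `α Id`, then
`χ²(γ|μ) ≤ (2πα)^{-n/2} exp(φ(x₀) + L²α/2)`. -/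
theorem chiSq_gaussian_le
    (n : ℕ) (hn : 1 ≤ n)
    (φ : EuclideanSpace ℝ (Fin n) → ℝ)
    (L : ℝ) (hL : 0 < L) (hφLip : LipschitzWith (Real.toNNReal L) φ)
    (μ : Measure (EuclideanSpace ℝ (Fin n)))
    (hμ : μ = volume.withDensity fun x => ENNReal.ofReal (Real.exp (-φ x)))
    (hμprob : IsProbabilityMeasure μ)
    (x₀ : EuclideanSpace ℝ (Fin n)) (α : ℝ) (hα : 0 < α)
    (γ : Measure (EuclideanSpace ℝ (Fin n)))
    (hγ : γ = gaussianPi n x₀ α) :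
    chiSq γ μ ≤ (2 * Real.pi * α) ^ (-(n : ℝ) / 2) * Real.exp (φ x₀ + L ^ 2 * α / 2) := by
  exact chiSq_gaussian_le' n hn φ L hL hφLip μ hμ hμprob x₀ α hα γ hγ
end
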